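/- For every matrix M in the Clifford+Triangle fragment there exists h ∈ ℕ such that every entry of (√2)^h · M is a Gaussian integer (an element of ℤ[i] ⊆ ℂ). -/

import Mathlib

noncomputable section

/-- Matrices of size `2^m × 2^n`, indexed by bit strings. -/
abbrev QMat (m n : ℕ) := Matrix (Fin m → Fin 2) (Fin n → Fin 2) ℂ

/-- The Hadamard matrix `(1/√2)[[1,1],[1,-1]]` as a `2×2` generator. -/
def hadM : QMat 1 1 :=
  fun x y => if x 0 = 1 ∧ y 0 = 1 then -((Real.sqrt 2 : ℝ) : ℂ)⁻¹ else ((Real.sqrt 2 : ℝ) : ℂ)⁻¹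

/-- The triangle matrix `[[1,1],[0,1]]` as a `2×2` generator. -/
def triM : QMat 1 1 :=
  fun x y => if x 0 = 1 ∧ y 0 = 0 then 0 else 1

/-- The swap matrix on `ℂ²⊗ℂ²`. -/
def swapM : QMat 2 2 :=
  fun x y => if x 0 = y 1 ∧ x 1 = y 0 then 1 else 0

/-- The Z-spider `Z_k^{m,n} = |0⟩^{⊗m}⟨0|^{⊗n} + i^k |1⟩^{⊗m}⟨1|^{⊗n}`
(phase an integer multiple of π/2). -/
def zSpider (k : ℤ) (m n : ℕ) : QMat m n :=
  fun x y =>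
    (if (∀ i, x i = 0) ∧ (∀ j, y j = 0) then 1 else 0) +
      Complex.I ^ k * (if (∀ i, x i = 1) ∧ (∀ j, y j = 1) then 1 else 0)

/-- Kronecker (tensor) product of matrices on qubit registers. -/
def kronM {m n p q : ℕ} (A : QMat m n) (B : QMat p q) : QMat (m + p) (n + q) :=
  fun x y =>
    A (fun i => x (Fin.castAdd p i)) (fun j => y (Fin.castAdd q j)) *
      B (fun i => x (Fin.natAdd m i)) (fun j => y (Fin.natAdd n j))

/-- The Clifford+Triangle fragment: the smallest family of matrices containing the
Hadamard matrix, the triangle matrix, the swap matrix and all Z-spiders with phases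
integer multiples of π/2, closed under composition and Kronecker product. -/
inductive CliffordTriangle : {m n : ℕ} → QMat m n → Prop
  | had : CliffordTriangle hadM
  | tri : CliffordTriangle triM
  | swap : CliffordTriangle swapM
  | zspider (k : ℤ) (m n : ℕ) : CliffordTriangle (zSpider k m n)
  | mul {m n p : ℕ} {A : QMat m n} {B : QMat n p} :
      CliffordTriangle A → CliffordTriangle B → CliffordTriangle (A * B)
  | kron {m n p q : ℕ} {A : QMat m n} {B : QMat p q} :
      CliffordTriangle A → CliffordTriangle B → CliffordTriangle (kronM A B)

def GInt : Subring ℂ where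
  carrier := {z | ∃ a b : ℤ, z = (a : ℂ) + (b : ℂ) * Complex.I}
  zero_mem' := ⟨0, 0, by simp⟩
  one_mem' := ⟨1, 0, by simp⟩
  add_mem' := by
    rintro x y ⟨a, b, rfl⟩ ⟨c, d, rfl⟩
    exact ⟨a + c, b + d, by push_cast; ring⟩
  neg_mem' := by
    rintro x ⟨a, b, rfl⟩
    exact ⟨-a, -b, by push_cast; ring⟩
  mul_mem' := by
    rintro x y ⟨a, b, rfl⟩ ⟨c, d, rfl⟩
    refine ⟨a * c - b * d, a * d + b * c, ?_⟩
    push_cast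
    ring_nf
    rw [Complex.I_sq]
    ring

lemma I_mem : Complex.I ∈ GInt := ⟨0, 1, by simp⟩

lemma I_zpow_mem (k : ℤ) : Complex.I ^ k ∈ GInt := by
  induction k using Int.induction_on with
  | zero => simpa using GInt.one_mem
  | succ n ih =>
    rw [zpow_add_one₀ Complex.I_ne_zero]
    exact GInt.mul_mem ih I_mem
  | pred n ih =>
    rw [zpow_sub_one₀ Complex.I_ne_zero, Complex.inv_I]
    exact GInt.mul_mem ih (GInt.neg_mem I_mem)

lemma sqrt2_ne : ((Real.sqrt 2 : ℝ) : ℂ) ≠ 0 := by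
  simp [Real.sqrt_eq_zero']

/-- For every matrix `M` in the Clifford+Triangle fragment there is an `h ∈ ℕ`
such that every entry of `(√2)^h · M` is a Gaussian integer. -/
theorem cliffordTriangle_entries_gaussian :
    ∀ {m n : ℕ} (M : QMat m n), CliffordTriangle M →
      ∃ h : ℕ, ∀ x y, ∃ a b : ℤ,
        ((Real.sqrt 2 : ℝ) : ℂ) ^ h * M x y = (a : ℂ) + (b : ℂ) * Complex.I := by
  have key : ∀ {m n : ℕ} (M : QMat m n), CliffordTriangle M →
      ∃ h : ℕ, ∀ x y, ((Real.sqrt 2 : ℝ) : ℂ) ^ h * M x y ∈ GInt := by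
    intro m n M hM
    induction hM with
    | had =>
      refine ⟨1, fun x y => ?_⟩
      unfold hadM
      split
      · rw [pow_one, mul_neg, mul_inv_cancel₀ sqrt2_ne]
        exact GInt.neg_mem GInt.one_mem
      · rw [pow_one, mul_inv_cancel₀ sqrt2_ne]
        exact GInt.one_mem
    | tri =>
      refine ⟨0, fun x y => ?_⟩
      unfold triM
      split <;> simp [GInt.zero_mem, GInt.one_mem]
    | swap =>
      refine ⟨0, fun x y => ?_⟩
      unfold swapM
      split <;> simp [GInt.zero_mem, GInt.one_mem]
    | zspider k m n =>
      refine ⟨0, fun x y => ?_⟩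
      unfold zSpider
      rw [pow_zero, one_mul]
      refine GInt.add_mem ?_ (GInt.mul_mem (I_zpow_mem k) ?_) <;>
        first
        | (split <;> simp [GInt.zero_mem, GInt.one_mem])
    | mul hA hB ihA ihB =>
      obtain ⟨h₁, H₁⟩ := ihA
      obtain ⟨h₂, H₂⟩ := ihB
      refine ⟨h₁ + h₂, fun x y => ?_⟩
      have key2 : ∀ u v : ℂ, ((Real.sqrt 2 : ℝ) : ℂ) ^ (h₁ + h₂) * (u * v) =
          (((Real.sqrt 2 : ℝ) : ℂ) ^ h₁ * u) * (((Real.sqrt 2 : ℝ) : ℂ) ^ h₂ * v) := by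
        intro u v; rw [pow_add]; ring
      rw [Matrix.mul_apply, Finset.mul_sum]
      refine Subring.sum_mem _ fun z _ => ?_
      rw [key2]
      exact GInt.mul_mem (H₁ x z) (H₂ z y)
    | kron hA hB ihA ihB =>
      obtain ⟨h₁, H₁⟩ := ihA
      obtain ⟨h₂, H₂⟩ := ihB
      refine ⟨h₁ + h₂, fun x y => ?_⟩
      have key2 : ∀ u v : ℂ, ((Real.sqrt 2 : ℝ) : ℂ) ^ (h₁ + h₂) * (u * v) =
          (((Real.sqrt 2 : ℝ) : ℂ) ^ h₁ * u) * (((Real.sqrt 2 : ℝ) : ℂ) ^ h₂ * v) := by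
        intro u v; rw [pow_add]; ring
      unfold kronM
      rw [key2]
      exact GInt.mul_mem (H₁ _ _) (H₂ _ _)
  intro m n M hM
  obtain ⟨h, H⟩ := key M hM
  exact ⟨h, fun x y => H x y⟩

end
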